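/- arXiv:2603.19946 — 3 statements merged into one kernel-verified Lean document; each statement's English description precedes it below -/
import Mathlib

section
/- Let f : ℕ →. ℕ be a partial function and let g : ℕ → ℕ be a total function. Suppose every partial function h : ℕ →. ℕ that is T1-reducible to both f and g is T1-computable (equivalently, the meet of the T1 degrees of f and g is the bottom degree). Then f is T1-computable or g is computable. -/
open Classical in
/-- The oracle game: the list of previous answers by Merlin up to stage `i`,
for the answer sequence `s`. -/
def prefixList (s : ℕ → ℕ) (i : ℕ) : List ℕ := List.ofFn (fun j : Fin i => s j)

/-- A winning Arthur+Nimue strategy for the reduction game of the basic oracle `ℱ`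
to the basic oracle `𝒢`. -/
def Winning (ℱ 𝒢 : Set (Set ℕ)) (σ : List ℕ →. Option ℕ) (ν : Set ℕ → List ℕ → Set ℕ) : Prop :=
  (∀ F ∈ ℱ, ∀ l : List ℕ, ν F l ∈ 𝒢) ∧
  ∀ F ∈ ℱ, ∀ s : ℕ → ℕ, (∀ i, s i ∈ ν F (prefixList s i)) →
    ∃ k, (∀ i ≤ k, (σ (prefixList s i)).Dom) ∧
      (∀ i < k, none ∈ σ (prefixList s i)) ∧
      ∃ u ∈ F, some u ∈ σ (prefixList s k)

/-- The encoding of an Arthur strategy as a partial function `ℕ →. ℕ`, via the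
standard Mathlib encodings of `List ℕ` and `Option ℕ`. -/
def arthurCode (σ : List ℕ →. Option ℕ) : ℕ →. ℕ :=
  fun n => (σ (Denumerable.ofNat (List ℕ) n)).map Encodable.encode

open Classical in
/-- The decoding oracle associated to the promise problem `(P, Q)`: value `0` on `P`,
value `1` on `Q`, undefined elsewhere. -/
noncomputable def dOracle (P Q : Set ℕ) : ℕ →. ℕ :=
  fun n => ⟨n ∈ P ∪ Q, fun _ => if n ∈ Q then 1 else 0⟩

open Classical in
/-- The characteristic function of a set of naturals. -/
noncomputable def chi (A : Set ℕ) : ℕ → ℕ := fun n => if n ∈ A then 1 else 0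

/-- The coded cartesian product of two sets of naturals. -/
def tensor (P Q : Set ℕ) : Set ℕ := {x | ∃ p ∈ P, ∃ q ∈ Q, x = Nat.pair p q}

infixl:70 " ⊗ " => tensor

/-- Oracle computability, as in Mathlib's `Nat.RecursiveIn`. -/
inductive Nat.RecursiveInOracle (g : ℕ →. ℕ) : (ℕ →. ℕ) → Prop
  | zero : Nat.RecursiveInOracle g fun _ => 0
  | succ : Nat.RecursiveInOracle g Nat.succ
  | left : Nat.RecursiveInOracle g fun n => (Nat.unpair n).1
  | right : Nat.RecursiveInOracle g fun n => (Nat.unpair n).2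
  | oracle : Nat.RecursiveInOracle g g
  | pair {f h : ℕ →. ℕ} (hf : Nat.RecursiveInOracle g f) (hh : Nat.RecursiveInOracle g h) :
      Nat.RecursiveInOracle g fun n => (Nat.pair <$> f n <*> h n)
  | comp {f h : ℕ →. ℕ} (hf : Nat.RecursiveInOracle g f) (hh : Nat.RecursiveInOracle g h) :
      Nat.RecursiveInOracle g fun n => h n >>= f
  | prec {f h : ℕ →. ℕ} (hf : Nat.RecursiveInOracle g f) (hh : Nat.RecursiveInOracle g h) :
      Nat.RecursiveInOracle g
        (Nat.unpaired fun a n =>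
          n.rec (f a) fun y IH => do
            let i ← IH
            h (Nat.pair a (Nat.pair y i)))
  | rfind {f : ℕ →. ℕ} (hf : Nat.RecursiveInOracle g f) :
      Nat.RecursiveInOracle g fun a =>
        Nat.rfind fun n => (fun m => m = 0) <$> f (Nat.pair a n)

/-- `f` is T1-reducible to `g`: some partial function recursive in the oracle `g`
extends `f`. -/
def T1Reducible (f g : ℕ →. ℕ) : Prop :=
  ∃ h : ℕ →. ℕ, Nat.RecursiveInOracle g h ∧ ∀ n : ℕ, ∀ a ∈ f n, a ∈ h n

/-- `f` is T1-computable: it has a partial computable extension. -/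
def T1Computable (f : ℕ →. ℕ) : Prop :=
  ∃ h : ℕ →. ℕ, Nat.Partrec h ∧ ∀ n : ℕ, ∀ a ∈ f n, a ∈ h n

/-- Codes for oracle computations: Mathlib's `Nat.Partrec.Code` extended by an
`oracle` constructor. -/
inductive OCode : Type
  | zero : OCode
  | succ : OCode
  | left : OCode
  | right : OCode
  | oracle : OCode
  | pair : OCode → OCode → OCode
  | comp : OCode → OCode → OCode
  | prec : OCode → OCode → OCode
  | rfind' : OCode → OCode

/-- Evaluation of an oracle code relative to the oracle `g`, by the same structural
recursion as Mathlib's `Nat.Partrec.Code.eval`. -/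
def OCode.eval (g : ℕ →. ℕ) : OCode → ℕ →. ℕ
  | .zero => pure 0
  | .succ => Nat.succ
  | .left => ↑fun n : ℕ => n.unpair.1
  | .right => ↑fun n : ℕ => n.unpair.2
  | .oracle => g
  | .pair cf cg => fun n => Nat.pair <$> cf.eval g n <*> cg.eval g n
  | .comp cf cg => fun n => cg.eval g n >>= cf.eval g
  | .prec cf cg =>
    Nat.unpaired fun a n =>
      n.rec (cf.eval g a) fun y IH => do
        let i ← IH
        cg.eval g (Nat.pair a (Nat.pair y i))
  | .rfind' cf =>
    Nat.unpaired fun a m =>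
      (Nat.rfind fun n => (fun m => m = 0) <$> cf.eval g (Nat.pair a (n + m))).map (· + m)

/-- The `n`-th oracle code. -/
def OCode.ofNat : ℕ → OCode
  | 0 => .zero
  | 1 => .succ
  | 2 => .left
  | 3 => .right
  | 4 => .oracle
  | n + 5 =>
    have h1 : (n / 4).unpair.1 < n + 5 :=
      lt_of_le_of_lt (le_trans (Nat.unpair_left_le _) (Nat.div_le_self _ _)) (by omega)
    have h2 : (n / 4).unpair.2 < n + 5 :=
      lt_of_le_of_lt (le_trans (Nat.unpair_right_le _) (Nat.div_le_self _ _)) (by omega)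
    if n % 4 = 0 then .pair (OCode.ofNat (n / 4).unpair.1) (OCode.ofNat (n / 4).unpair.2)
    else if n % 4 = 1 then .comp (OCode.ofNat (n / 4).unpair.1) (OCode.ofNat (n / 4).unpair.2)
    else if n % 4 = 2 then .prec (OCode.ofNat (n / 4).unpair.1) (OCode.ofNat (n / 4).unpair.2)
    else .rfind' (OCode.ofNat (n / 4).unpair.1)

/-- `φ_e^g`: the evaluation of the `e`-th oracle code relative to the oracle `g`. -/
def phi (g : ℕ →. ℕ) (e : ℕ) : ℕ →. ℕ := (OCode.ofNat e).eval g

/-- `H_i^A`: the set of (codes of) oracle programs which, run with the characteristic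
function of `A` as oracle, halt on input `0` with output `i`. -/
def Hset (A : Set ℕ) (i : ℕ) : Set ℕ := {e : ℕ | (i : ℕ) ∈ phi (chi A) e 0}

/-!
Let `h` be the partial function which on `⟨⟨n, v⟩, ⟨k, y⟩⟩` answers whether `f n = v`, but is
defined only when `f n` is defined and this answer coincides with whether `g k = y`. Testing
the graph of `f`, resp. of `g`, extends `h`, so `h` is below both oracles and therefore has a
partial computable extension `p`.

Call `v` *split* at `n` if for some `k` there are two different `y` with `p ⟨⟨n, v⟩, ⟨k, y⟩⟩ = 1`.
One of these `y` differs from `g k`, so `h` would be `0` there unless `v = f n`: split values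
are correct. If every `n` in the domain of `f` has a split value, searching for one computes an
extension of `f`. Otherwise some `n` with `f n = w` has none; then `p ⟨⟨n, w⟩, ⟨k, y⟩⟩ = 1`
holds exactly for `y = g k`, and searching for such a `y` computes `g`.
-/

namespace Nat.RecursiveInOracle

theorem of_partrec {O f : ℕ →. ℕ} (hf : Nat.Partrec f) : Nat.RecursiveInOracle O f := by
  induction hf with
  | zero => exact .zero
  | succ => exact .succ
  | left => exact .left
  | right => exact .right
  | pair _ _ ihf ihh => exact .pair ihf ihh
  | comp _ _ ihf ihh => exact .comp ihf ihh
  | prec _ _ ihf ihh => exact .prec ihf ihh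
  | rfind _ ihf => exact .rfind ihf

theorem map_comp {O F : ℕ →. ℕ} (hF : Nat.RecursiveInOracle O F) {k : ℕ → ℕ} (hk : Computable k)
    {u : ℕ → ℕ → ℕ} (hu : Computable₂ u) :
    Nat.RecursiveInOracle O fun x => (F (k x)).map (u x) := by
  have hid : Nat.RecursiveInOracle O fun x => Part.some x := of_partrec Nat.Partrec.some
  have hk' : Nat.RecursiveInOracle O fun x => Part.some (k x) :=
    of_partrec (Partrec.nat_iff.1 hk.partrec)
  have hu' : Nat.RecursiveInOracle O fun z => Part.some (u z.unpair.1 z.unpair.2) :=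
    of_partrec (Partrec.nat_iff.1 (hu.comp (Computable.fst.comp Computable.unpair)
      (Computable.snd.comp Computable.unpair)).partrec)
  refine (congrArg _ (funext fun x => ?_)).mp (hu'.comp (hid.pair (hF.comp hk')))
  rw [show (Part.some (k x) >>= F) = F (k x) from Part.bind_some _ F]
  simp only [Seq.seq, Part.map_eq_map, Part.map_some, Part.bind_some, Part.bind_eq_bind,
    Part.bind_map, unpair_pair]
  exact Part.bind_some_eq_map _ _

end Nat.RecursiveInOracle

def graphTest (F : ℕ →. ℕ) (x : ℕ) : Part ℕ :=
  (F x.unpair.1).map fun w => if w = x.unpair.2 then 1 else 0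

theorem recursiveInOracle_graphTest_comp (F : ℕ →. ℕ) {k : ℕ → ℕ} (hk : Primrec k) :
    Nat.RecursiveInOracle F fun x => graphTest F (k x) :=
  .map_comp .oracle (Primrec.fst.comp (Primrec.unpair.comp hk)).to_comp
    (Primrec.ite
      (Primrec.eq.comp Primrec.snd (Primrec.snd.comp (Primrec.unpair.comp (hk.comp Primrec.fst))))
      (Primrec.const 1) (Primrec.const 0)).to_comp

theorem mem_graphTest {F : ℕ →. ℕ} {n v a : ℕ} :
    a ∈ graphTest F (Nat.pair n v) ↔ ∃ w ∈ F n, (if w = v then 1 else 0) = a := by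
  simp [graphTest]

open Classical in
noncomputable def agreement (F G : ℕ →. ℕ) : ℕ →. ℕ :=
  fun x => (F x).bind fun a => if a ∈ G x then Part.some a else Part.none

theorem mem_agreement {F G : ℕ →. ℕ} {x a : ℕ} : a ∈ agreement F G x ↔ a ∈ F x ∧ a ∈ G x := by
  simp only [agreement, Part.mem_bind_iff]
  constructor
  · rintro ⟨b, hb, h⟩
    split_ifs at h with hbG
    · obtain rfl := Part.mem_some_iff.1 h
      exact ⟨hb, hbG⟩
    · exact absurd h (Part.notMem_none a)
  · rintro ⟨hF, hG⟩
    exact ⟨a, hF, by simp [hG]⟩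

def query (n v k y : ℕ) : ℕ := Nat.pair (Nat.pair n v) (Nat.pair k y)

/-- On `query n v k y` this is `1` if `f n = v` and `g k = y`, `0` if `f n` is defined,
`f n ≠ v` and `g k ≠ y`, and undefined otherwise. -/
noncomputable def graphPairTest (f : ℕ →. ℕ) (g : ℕ → ℕ) : ℕ →. ℕ :=
  agreement (fun x => graphTest f x.unpair.1) (fun x => graphTest g x.unpair.2)

theorem t1Reducible_graphPairTest_left (f : ℕ →. ℕ) (g : ℕ → ℕ) :
    T1Reducible (graphPairTest f g) f :=
  ⟨_, recursiveInOracle_graphTest_comp f (Primrec.fst.comp Primrec.unpair),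
    fun _ _ ha => (mem_agreement.1 ha).1⟩

theorem t1Reducible_graphPairTest_right (f : ℕ →. ℕ) (g : ℕ → ℕ) :
    T1Reducible (graphPairTest f g) g :=
  ⟨_, recursiveInOracle_graphTest_comp g (Primrec.snd.comp Primrec.unpair),
    fun _ _ ha => (mem_agreement.1 ha).2⟩

theorem one_mem_graphPairTest {f : ℕ →. ℕ} {g : ℕ → ℕ} {n v k : ℕ} (hv : v ∈ f n) :
    1 ∈ graphPairTest f g (query n v k (g k)) := by
  refine mem_agreement.2 ⟨?_, ?_⟩ <;> simp only [query, Nat.unpair_pair, mem_graphTest]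
  exacts [⟨v, hv, if_pos rfl⟩, ⟨g k, Part.mem_some _, if_pos rfl⟩]

theorem zero_mem_graphPairTest {f : ℕ →. ℕ} {g : ℕ → ℕ} {n v w k y : ℕ} (hw : w ∈ f n)
    (hwv : w ≠ v) (hy : g k ≠ y) : 0 ∈ graphPairTest f g (query n v k y) := by
  refine mem_agreement.2 ⟨?_, ?_⟩ <;> simp only [query, Nat.unpair_pair, mem_graphTest]
  exacts [⟨w, hw, if_neg hwv⟩, ⟨g k, Part.mem_some _, if_neg hy⟩]

theorem Nat.Partrec.exists_primrec_approx {p : ℕ →. ℕ} (hp : Nat.Partrec p) :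
    ∃ e : ℕ → ℕ → Option ℕ, Primrec₂ e ∧ ∀ x a, a ∈ p x ↔ ∃ s, e s x = some a := by
  obtain ⟨c, rfl⟩ := Code.exists_code.1 hp
  exact ⟨fun s x => Code.evaln s c x,
    Code.primrec_evaln.comp ((_root_.Primrec.fst.pair (_root_.Primrec.const c)).pair
      _root_.Primrec.snd),
    fun _ _ => Code.evaln_complete⟩

open Encodable in
theorem exists_partrec_choice {α β γ : Type*} [Primcodable α] [Primcodable β] [Primcodable γ]
    {R : α → β → Prop} {Q : α → β × γ → Prop} (hQ : PrimrecRel Q)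
    (hR : ∀ a b, R a b ↔ ∃ w, Q a (b, w)) :
    ∃ s : α →. β, Partrec s ∧ ∀ a, (∀ b ∈ s a, R a b) ∧ ((∃ b, R a b) → (s a).Dom) := by
  classical
  let o : α → ℕ → Option (β × γ) := fun a n => (decode n).bind (Option.guard (Q a ·))
  have ho : Computable₂ o :=
    (Primrec.option_bind (Primrec.decode.comp Primrec.snd)
      (Primrec.option_guard (p := fun (z : (α × ℕ) × (β × γ)) => Q z.1.1)
        (hQ.comp (Primrec.fst.comp (Primrec.fst.comp Primrec.fst)) Primrec.snd)
        Primrec.snd).to₂).to_comp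
  refine ⟨fun a => (Nat.rfindOpt (o a)).map Prod.fst,
    (Partrec.rfindOpt ho).map (Computable.fst.comp Computable.snd).to₂, fun a => ⟨?_, ?_⟩⟩
  · intro b hb
    obtain ⟨⟨b, w⟩, hbw, rfl⟩ := (Part.mem_map_iff _).1 hb
    obtain ⟨n, hn⟩ := Nat.rfindOpt_spec hbw
    simp only [o, Option.mem_def, Option.bind_eq_some_iff, Option.guard_eq_some_iff] at hn
    obtain ⟨_, -, rfl, hQ⟩ := hn
    exact (hR a b).2 ⟨w, of_decide_eq_true hQ⟩
  · rintro ⟨b, hb⟩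
    obtain ⟨w, hw⟩ := (hR a b).1 hb
    exact Nat.rfindOpt_dom.2 ⟨encode (b, w), (b, w), by simp [o, encodek, hw]⟩

theorem primrec_query : Primrec fun x : (ℕ × ℕ) × ℕ × ℕ => query x.1.1 x.1.2 x.2.1 x.2.2 :=
  Primrec₂.natPair.comp (Primrec₂.natPair.comp (Primrec.fst.comp Primrec.fst)
    (Primrec.snd.comp Primrec.fst)) (Primrec₂.natPair.comp (Primrec.fst.comp Primrec.snd)
    (Primrec.snd.comp Primrec.snd))

theorem computable_of_partrec_graph {p : ℕ →. ℕ} (hp : Nat.Partrec p) {q : ℕ → ℕ → ℕ}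
    (hq : Primrec₂ q) {g : ℕ → ℕ} (hg : ∀ k y, 1 ∈ p (q k y) ↔ g k = y) : Computable g := by
  obtain ⟨e, he, hpe⟩ := hp.exists_primrec_approx
  obtain ⟨s, hs, hspec⟩ := exists_partrec_choice (R := fun k y => g k = y)
    (Q := fun k (ys : ℕ × ℕ) => e ys.2 (q k ys.1) = some 1)
    (PrimrecRel.comp Primrec.eq (he.comp (Primrec.snd.comp Primrec.snd)
      (hq.comp Primrec.fst (Primrec.fst.comp Primrec.snd))) (Primrec.const (some 1)))
    (fun k y => by rw [← hg, hpe])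
  refine hs.of_eq_tot fun k => ?_
  obtain ⟨y, hy⟩ := Part.dom_iff_mem.1 ((hspec k).2 ⟨g k, rfl⟩)
  rwa [(hspec k).1 y hy]

/-- `vt = (v, (k, y, y'), s₁, s₂)` witnesses, via stage approximations `e`, that `v` splits. -/
theorem primrecRel_splitWitness {e : ℕ → ℕ → Option ℕ} (he : Primrec₂ e) :
    PrimrecRel fun n (vt : ℕ × (ℕ × ℕ × ℕ) × ℕ × ℕ) =>
      vt.2.1.2.1 ≠ vt.2.1.2.2 ∧ e vt.2.2.1 (query n vt.1 vt.2.1.1 vt.2.1.2.1) = some 1 ∧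
        e vt.2.2.2 (query n vt.1 vt.2.1.1 vt.2.1.2.2) = some 1 := by
  have hk : Primrec fun z : ℕ × ℕ × (ℕ × ℕ × ℕ) × ℕ × ℕ => z.2.2.1.1 :=
    Primrec.fst.comp (Primrec.fst.comp (Primrec.snd.comp Primrec.snd))
  have hy : Primrec fun z : ℕ × ℕ × (ℕ × ℕ × ℕ) × ℕ × ℕ => z.2.2.1.2.1 :=
    Primrec.fst.comp (Primrec.snd.comp (Primrec.fst.comp (Primrec.snd.comp Primrec.snd)))
  have hy' : Primrec fun z : ℕ × ℕ × (ℕ × ℕ × ℕ) × ℕ × ℕ => z.2.2.1.2.2 :=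
    Primrec.snd.comp (Primrec.snd.comp (Primrec.fst.comp (Primrec.snd.comp Primrec.snd)))
  have hhalts : ∀ {y s : ℕ × ℕ × (ℕ × ℕ × ℕ) × ℕ × ℕ → ℕ}, Primrec y → Primrec s →
      PrimrecPred fun z => e (s z) (query z.1 z.2.1 z.2.2.1.1 (y z)) = some 1 :=
    fun hy hs => PrimrecRel.comp Primrec.eq (he.comp hs (primrec_query.comp
      ((Primrec.fst.pair (Primrec.fst.comp Primrec.snd)).pair (hk.pair hy))))
      (Primrec.const _)
  exact (PrimrecRel.comp Primrec.eq hy hy').not.and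
    ((hhalts hy (Primrec.fst.comp (Primrec.snd.comp (Primrec.snd.comp Primrec.snd)))).and
      (hhalts hy' (Primrec.snd.comp (Primrec.snd.comp (Primrec.snd.comp Primrec.snd)))))

section

variable {f : ℕ →. ℕ} {g : ℕ → ℕ} {p : ℕ →. ℕ}

def Splits (p : ℕ →. ℕ) (n v : ℕ) : Prop :=
  ∃ k y y', y ≠ y' ∧ 1 ∈ p (query n v k y) ∧ 1 ∈ p (query n v k y')

theorem eq_of_splits (hzero : ∀ n v w k y, w ∈ f n → w ≠ v → g k ≠ y → 0 ∈ p (query n v k y))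
    {n v w : ℕ} (hw : w ∈ f n) (hs : Splits p n v) : v = w := by
  obtain ⟨k, y, y', hyy', hy, hy'⟩ := hs
  by_contra hvw
  have hzero' : ∀ y, g k ≠ y → 0 ∈ p (query n v k y) := fun y => hzero n v w k y hw (Ne.symm hvw)
  by_cases hgy : g k = y
  · exact zero_ne_one (Part.mem_unique (hzero' _ (hgy ▸ hyy')) hy')
  · exact zero_ne_one (Part.mem_unique (hzero' _ hgy) hy)

theorem t1Computable_of_forall_splits (hp : Nat.Partrec p)
    (hzero : ∀ n v w k y, w ∈ f n → w ≠ v → g k ≠ y → 0 ∈ p (query n v k y))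
    (hsplit : ∀ n, (f n).Dom → ∃ v, Splits p n v) : T1Computable f := by
  obtain ⟨e, he, hpe⟩ := hp.exists_primrec_approx
  obtain ⟨s, hs, hspec⟩ := exists_partrec_choice (R := Splits p) (primrecRel_splitWitness he) fun n v => by
    simp only [Splits, hpe]
    constructor
    · rintro ⟨k, y, y', hyy', ⟨s₁, hs₁⟩, ⟨s₂, hs₂⟩⟩
      exact ⟨((k, y, y'), s₁, s₂), hyy', hs₁, hs₂⟩
    · rintro ⟨⟨⟨k, y, y'⟩, s₁, s₂⟩, hyy', hs₁, hs₂⟩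
      exact ⟨k, y, y', hyy', ⟨s₁, hs₁⟩, ⟨s₂, hs₂⟩⟩
  refine ⟨s, Partrec.nat_iff.1 hs, fun n a ha => ?_⟩
  obtain ⟨v, hv⟩ := Part.dom_iff_mem.1 ((hspec n).2 (hsplit n (Part.dom_iff_mem.2 ⟨a, ha⟩)))
  rwa [← eq_of_splits hzero ha ((hspec n).1 v hv)]

theorem computable_of_not_splits (hp : Nat.Partrec p)
    (hone : ∀ n v k, v ∈ f n → 1 ∈ p (query n v k (g k))) {n w : ℕ} (hw : w ∈ f n)
    (hns : ¬ Splits p n w) : Computable g :=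
  computable_of_partrec_graph hp (q := query n w)
    (primrec_query.comp ((Primrec.const (n, w)).pair Primrec.id))
    fun k y => ⟨fun hy => by_contra fun hne => hns ⟨k, g k, y, hne, hone n w k hw, hy⟩,
      fun h => h ▸ hone n w k hw⟩

end

theorem stmt4 (f : ℕ →. ℕ) (g : ℕ → ℕ)
    (hmeet : ∀ h : ℕ →. ℕ, T1Reducible h f → T1Reducible h ↑g → T1Computable h) :
    T1Computable f ∨ Computable g := by
  obtain ⟨p, hp, hext⟩ := hmeet (graphPairTest f g) (t1Reducible_graphPairTest_left f g)
    (t1Reducible_graphPairTest_right f g)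
  by_cases hsplit : ∀ n, (f n).Dom → ∃ v, Splits p n v
  · exact .inl <| t1Computable_of_forall_splits hp
      (fun _ _ _ _ _ hw hwv hy => hext _ _ (zero_mem_graphPairTest hw hwv hy)) hsplit
  · push Not at hsplit
    obtain ⟨n, hn, hns⟩ := hsplit
    exact .inr <| computable_of_not_splits hp (fun _ _ _ hv => hext _ _ (one_mem_graphPairTest hv))
      (Part.get_mem hn) (hns _)
end

section
/- Let (P₂,Q₂) and (P₁,Q₁) be pairs of disjoint inhabited subsets of ℕ. If (P₂,Q₂) is many-one reducible to (P₁,Q₁), then the decoding oracle d_{P₂,Q₂} is T1-reducible to the decoding oracle d_{P₁,Q₁}. -/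
infixl:70 " ⊗ " => tensor

/-- Many-one reducibility of promise problems: `(P₂,Q₂)` is many-one reducible to
`(P₁,Q₁)` via a partial computable function defined on all of `P₂ ∪ Q₂`. -/
def PromiseMRed (P₂ Q₂ P₁ Q₁ : Set ℕ) : Prop :=
  ∃ f : ℕ →. ℕ, Nat.Partrec f ∧ (∀ n ∈ P₂ ∪ Q₂, (f n).Dom) ∧
    (∀ n ∈ P₂, ∀ a ∈ f n, a ∈ P₁) ∧ (∀ n ∈ Q₂, ∀ a ∈ f n, a ∈ Q₁)


theorem Nat.Partrec.recursiveInOracle (g : ℕ →. ℕ) {f : ℕ →. ℕ} (hf : Nat.Partrec f) :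
    Nat.RecursiveInOracle g f := by
  induction hf with
  | zero => exact .zero
  | succ => exact .succ
  | left => exact .left
  | right => exact .right
  | pair _ _ ih₁ ih₂ => exact .pair ih₁ ih₂
  | comp _ _ ih₁ ih₂ => exact .comp ih₁ ih₂
  | prec _ _ ih₁ ih₂ => exact .prec ih₁ ih₂
  | rfind _ ih => exact .rfind ih

section dOracle

variable {P Q : Set ℕ} {n : ℕ}

theorem dOracle_of_mem_right (h : n ∈ Q) : dOracle P Q n = Part.some 1 :=
  Part.eq_some_iff.2 ⟨Or.inr h, if_pos h⟩

theorem dOracle_of_mem_left (hP : n ∈ P) (hQ : n ∉ Q) : dOracle P Q n = Part.some 0 :=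
  Part.eq_some_iff.2 ⟨Or.inl hP, if_neg hQ⟩

theorem dOracle_of_disjoint_of_mem_left (hd : Disjoint P Q) (h : n ∈ P) :
    dOracle P Q n = Part.some 0 :=
  dOracle_of_mem_left h (Set.disjoint_left.1 hd h)

end dOracle

theorem mem_bind_dOracle_of_mem_dOracle {P₂ Q₂ P₁ Q₁ : Set ℕ} {f : ℕ →. ℕ} (hd₁ : Disjoint P₁ Q₁)
    (hdom : ∀ n ∈ P₂ ∪ Q₂, (f n).Dom) (hfP : ∀ n ∈ P₂, ∀ m ∈ f n, m ∈ P₁)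
    (hfQ : ∀ n ∈ Q₂, ∀ m ∈ f n, m ∈ Q₁) (n : ℕ) :
    ∀ a ∈ dOracle P₂ Q₂ n, a ∈ f n >>= dOracle P₁ Q₁ := by
  rintro a ⟨hn, rfl⟩
  have hm : (f n).get (hdom n hn) ∈ f n := Part.get_mem _
  refine Part.mem_bind_iff.2 ⟨_, hm, ?_⟩
  by_cases hQ : n ∈ Q₂
  · rw [dOracle_of_mem_right (hfQ n hQ _ hm)]
    exact Part.mem_some_iff.2 (if_pos hQ)
  · have hP : n ∈ P₂ := hn.resolve_right hQ
    rw [dOracle_of_disjoint_of_mem_left hd₁ (hfP n hP _ hm)]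
    exact Part.mem_some_iff.2 (if_neg hQ)

theorem stmt9_general (P₂ Q₂ P₁ Q₁ : Set ℕ)
    (hd1 : Disjoint P₁ Q₁)
    (hred : PromiseMRed P₂ Q₂ P₁ Q₁) :
    T1Reducible (dOracle P₂ Q₂) (dOracle P₁ Q₁) := by
  obtain ⟨f, hf, hdom, hfP, hfQ⟩ := hred
  exact ⟨fun n => f n >>= dOracle P₁ Q₁, .comp .oracle (hf.recursiveInOracle _),
    mem_bind_dOracle_of_mem_dOracle hd1 hdom hfP hfQ⟩

theorem stmt9 (P₂ Q₂ P₁ Q₁ : Set ℕ)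
    (hd2 : Disjoint P₂ Q₂) (hP2 : P₂.Nonempty) (hQ2 : Q₂.Nonempty)
    (hd1 : Disjoint P₁ Q₁) (hP1 : P₁.Nonempty) (hQ1 : Q₁.Nonempty)
    (hred : PromiseMRed P₂ Q₂ P₁ Q₁) :
    T1Reducible (dOracle P₂ Q₂) (dOracle P₁ Q₁) :=
  stmt9_general P₂ Q₂ P₁ Q₁ hd1 hred
end

section
/- There exists a winning Arthur+Nimue strategy with partial computable Arthur strategy for the reduction game of the basic oracle {{n} | n ∈ ℕ} to the basic oracle {{0},{1}}, and also one for the reduction game of {{0},{1}} to {{n} | n ∈ ℕ}; i.e. these two basic oracles are T3-equivalent (either one defines the omniscient degree ω). -/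
infixl:70 " ⊗ " => tensor

/-!
To reduce `{{n} | n ∈ ℕ}` to `{{0}, {1}}`, Nimue, holding the secret `{n}`, answers `0` at
stage `n` and `1` at every other stage; Arthur waits for the first `0` and declares its
position. Conversely `{{0}, {1}}` is a subfamily of `{{n} | n ∈ ℕ}`, and whenever `ℱ ⊆ 𝒢`
Nimue may answer with the secret itself, so that Arthur wins by declaring the first answer.
-/

@[simp]
theorem prefixList_length (s : ℕ → ℕ) (i : ℕ) : (prefixList s i).length = i :=
  List.length_ofFn

theorem prefixList_succ (s : ℕ → ℕ) (i : ℕ) : prefixList s (i + 1) = prefixList s i ++ [s i] := by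
  rw [prefixList, List.ofFn_succ', List.concat_eq_append]
  rfl

theorem prefixList_getLast?_succ (s : ℕ → ℕ) (i : ℕ) :
    (prefixList s (i + 1)).getLast? = some (s i) := by
  rw [prefixList_succ, List.getLast?_concat]

theorem prefixList_one (s : ℕ → ℕ) : prefixList s 1 = [s 0] := rfl

theorem winning_of_total {ℱ 𝒢 : Set (Set ℕ)} {f : List ℕ → Option ℕ}
    {ν : Set ℕ → List ℕ → Set ℕ} (hν : ∀ F ∈ ℱ, ∀ l, ν F l ∈ 𝒢)
    (hwin : ∀ F ∈ ℱ, ∀ s : ℕ → ℕ, (∀ i, s i ∈ ν F (prefixList s i)) →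
      ∃ k, (∀ i < k, f (prefixList s i) = none) ∧ ∃ u ∈ F, f (prefixList s k) = some u) :
    Winning ℱ 𝒢 (fun l => Part.some (f l)) ν := by
  refine ⟨hν, fun F hF s hs => ?_⟩
  obtain ⟨k, hnone, u, hu, hk⟩ := hwin F hF s hs
  exact ⟨k, fun _ _ => trivial, fun i hi => Part.mem_some_iff.2 (hnone i hi).symm, u, hu,
    Part.mem_some_iff.2 hk.symm⟩

theorem partrec_some_of_primrec {f : List ℕ → Option ℕ} (hf : Primrec f) :
    Partrec fun l => Part.some (f l) :=
  hf.to_comp.partrec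

def firstAnswerArthur (l : List ℕ) : Option ℕ := l.head?

theorem primrec_firstAnswerArthur : Primrec firstAnswerArthur :=
  Primrec.list_head?

theorem winning_of_subset {ℱ 𝒢 : Set (Set ℕ)} (h : ℱ ⊆ 𝒢) :
    Winning ℱ 𝒢 (fun l => Part.some (firstAnswerArthur l)) (fun F _ => F) :=
  winning_of_total (fun _ hF _ => h hF) fun _ _ s hs =>
    ⟨1, fun i hi => by rw [Nat.lt_one_iff.1 hi]; rfl, s 0, hs 0, by rw [prefixList_one]; rfl⟩

def zeroPositionArthur (l : List ℕ) : Option ℕ :=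
  if l.getLast? = some 0 then some (l.length - 1) else none

noncomputable def stageIndicatorNimue (F : Set ℕ) (l : List ℕ) : Set ℕ :=
  open Classical in if l.length ∈ F then {0} else {1}

theorem primrec_zeroPositionArthur : Primrec zeroPositionArthur := by
  have hlast : Primrec fun l : List ℕ => l.getLast? :=
    (Primrec.list_head?.comp Primrec.list_reverse).of_eq fun _ => List.head?_reverse
  exact Primrec.ite (Primrec.eq.comp hlast (Primrec.const _))
    (Primrec.option_some.comp (Primrec.pred.comp Primrec.list_length)) (Primrec.const none)

theorem stageIndicatorNimue_mem_bits (F : Set ℕ) (l : List ℕ) :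
    stageIndicatorNimue F l ∈ ({{0}, {1}} : Set (Set ℕ)) := by
  unfold stageIndicatorNimue
  split_ifs <;> simp

theorem eq_of_consistent_stageIndicatorNimue {n : ℕ} {s : ℕ → ℕ}
    (hs : ∀ i, s i ∈ stageIndicatorNimue {n} (prefixList s i)) (i : ℕ) :
    s i = if i = n then 0 else 1 := by
  have := hs i
  simp only [stageIndicatorNimue, prefixList_length, Set.mem_singleton_iff] at this ⊢
  split_ifs at this ⊢ <;> exact this

theorem zeroPositionArthur_prefixList_succ {n : ℕ} {s : ℕ → ℕ}
    (hs : ∀ i, s i = if i = n then 0 else 1) (i : ℕ) :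
    zeroPositionArthur (prefixList s (i + 1)) = if i = n then some n else none := by
  unfold zeroPositionArthur
  rw [prefixList_getLast?_succ, hs, prefixList_length, Nat.add_sub_cancel]
  split_ifs <;> simp_all

theorem winning_singletons_bits :
    Winning (Set.range fun n : ℕ => ({n} : Set ℕ)) {{0}, {1}}
      (fun l => Part.some (zeroPositionArthur l)) stageIndicatorNimue := by
  refine winning_of_total (fun F _ l => stageIndicatorNimue_mem_bits F l) ?_
  rintro F ⟨n, rfl⟩ s hs
  have hval := eq_of_consistent_stageIndicatorNimue hs
  refine ⟨n + 1, fun i hi => ?_, n, rfl, by simp [zeroPositionArthur_prefixList_succ hval]⟩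
  rcases i with _ | i
  · rfl
  · rw [zeroPositionArthur_prefixList_succ hval, if_neg (by omega)]

theorem stmt19 :
    (∃ (σ : List ℕ →. Option ℕ) (ν : Set ℕ → List ℕ → Set ℕ),
      Partrec σ ∧ Winning (Set.range fun n : ℕ => ({n} : Set ℕ)) {{0}, {1}} σ ν) ∧
    (∃ (σ : List ℕ →. Option ℕ) (ν : Set ℕ → List ℕ → Set ℕ),
      Partrec σ ∧ Winning {{0}, {1}} (Set.range fun n : ℕ => ({n} : Set ℕ)) σ ν) := by
  have hbits : ({{0}, {1}} : Set (Set ℕ)) ⊆ Set.range fun n : ℕ => ({n} : Set ℕ) := by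
    rintro F (rfl | rfl)
    exacts [⟨0, rfl⟩, ⟨1, rfl⟩]
  exact ⟨⟨_, _, partrec_some_of_primrec primrec_zeroPositionArthur, winning_singletons_bits⟩,
    ⟨_, _, partrec_some_of_primrec primrec_firstAnswerArthur, winning_of_subset hbits⟩⟩
end
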